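/- arXiv:2104.09881 — 3 statements merged into one kernel-verified Lean document; each statement's English description precedes it below -/
import Mathlib

section
/- Blow-up alternatives (discrete Brezis–Merle): Let uₙ : V → ℝ be a sequence of functions satisfying −Δuₙ(x) = hₙ(x)e^{uₙ(x)} − cₙ for all x ∈ V, where hₙ : V → ℝ and cₙ ∈ ℝ satisfy hₙ(x) → h(x) for every x ∈ V and cₙ → c as n → ∞. Then there is a subsequence (u_{n_k}) such that one of the following alternatives holds: (1) sup_k max_{x∈V} |u_{n_k}(x)| < ∞; or (2) max_{x∈V} u_{n_k}(x) → −∞ as k → ∞; or (3) there exists x₀ ∈ V with h(x₀) = 0 and u_{n_k}(x₀) → +∞ as k → ∞, inf_k min_{x∈V} u_{n_k}(x) > −∞, and sup_k sup{u_{n_k}(x) : x ∈ V, h(x) > 0} < ∞. -/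
/-!
If `uₙ` solves `-Δuₙ = hₙ e^{uₙ} - cₙ` on a connected graph, Green's formula on a superlevel
set `{uₙ > B}` shows that the values of `uₙ` cannot jump over a level: some value lies in
`(B, g B]` with `g t = t + K (1 + e^t) vol / w₀`, where `K` bounds the data and `w₀` is the
least positive weight. Iterating, `max uₙ ≤ g^[|V| - 1] (min uₙ)`,
and `g^[|V| - 1] → -∞` at `-∞`. So either `max uₙ → -∞` along a subsequence, or `min uₙ` is
bounded below. In the latter case the exponential bounds `uₙ` where `h > 0`; if `max uₙ` is
unbounded, a subsequence blows up at a fixed maximum point `x₀`, where `h x₀ ≤ 0` by that bound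
and `h x₀ ≥ 0` because `Δuₙ(x₀) ≤ 0` gives `cₙ e^{-uₙ(x₀)} ≤ hₙ(x₀)`.
-/

open Finset Real

/-- The graph Laplacian: `Δu(x) = (1/μ x) * Σ_y ω x y * (u y - u x)`. -/
noncomputable def graphLap {V : Type*} [Fintype V] (ω : V → V → ℝ) (μ : V → ℝ)
    (u : V → ℝ) (x : V) : ℝ :=
  (1 / μ x) * ∑ y, ω x y * (u y - u x)

/-- The integral of `f` over `V` with respect to the vertex measure `μ`. -/
noncomputable def graphInt {V : Type*} [Fintype V] (μ : V → ℝ) (f : V → ℝ) : ℝ :=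
  ∑ x, f x * μ x

/-- Connectivity: any two distinct vertices are joined by a chain of positively
weighted edges. -/
def graphConn {V : Type*} (ω : V → V → ℝ) : Prop :=
  ∀ x y : V, x ≠ y → ∃ (m : ℕ) (p : ℕ → V), p 0 = x ∧ p m = y ∧
    ∀ i < m, 0 < ω (p i) (p (i + 1))

/-- The gradient form `Γ(u,v)(x)`. -/
noncomputable def graphGamma {V : Type*} [Fintype V] (ω : V → V → ℝ) (μ : V → ℝ)
    (u v : V → ℝ) (x : V) : ℝ :=
  (1 / (2 * μ x)) * ∑ y, ω x y * (u y - u x) * (v y - v x)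

/-- The length of the gradient: `|∇u|(x) = √(Γ(u,u)(x))`. -/
noncomputable def graphGradNorm {V : Type*} [Fintype V] (ω : V → V → ℝ) (μ : V → ℝ)
    (u : V → ℝ) (x : V) : ℝ :=
  Real.sqrt (graphGamma ω μ u u x)

/-- The functional `J_{h,f}(u) = ∫_V (½|∇u|² + f·u − h·e^u) dμ`. -/
noncomputable def Jfunc {V : Type*} [Fintype V] (ω : V → V → ℝ) (μ : V → ℝ)
    (h f : V → ℝ) (u : V → ℝ) : ℝ :=
  graphInt μ (fun x => (1 / 2) * (graphGradNorm ω μ u x) ^ 2 + f x * u x - h x * Real.exp (u x))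


open Filter Topology

theorem Finset.sum_sum_eq_zero_of_antisymm {ι : Type*} (s : Finset ι) {f : ι → ι → ℝ}
    (hf : ∀ x y, f y x = -f x y) : ∑ x ∈ s, ∑ y ∈ s, f x y = 0 := by
  have hswap : ∑ x ∈ s, ∑ y ∈ s, f x y = ∑ x ∈ s, ∑ y ∈ s, -f x y := by
    rw [sum_comm]
    exact sum_congr rfl fun x _ => sum_congr rfl fun y _ => hf x y
  simp only [sum_neg_distrib] at hswap
  linarith

theorem forall_le_iterate_of_exists_lt_le {ι α : Type*} [Fintype ι] [LinearOrder α] (f : ι → α)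
    (g : α → α) (hg : ∀ t, t ≤ g t)
    (hgap : ∀ B, (∃ z, f z ≤ B) → (∃ x, B < f x) → ∃ x, B < f x ∧ f x ≤ g B)
    {m : α} {z : ι} (hz : f z ≤ m) (x : ι) : f x ≤ g^[Fintype.card ι - 1] m := by
  classical
  set S : ℕ → Finset ι := fun j => univ.filter fun x => f x ≤ g^[j] m with hS
  have hmem : ∀ j x, x ∈ S j ↔ f x ≤ g^[j] m := by simp [hS]
  have hiter : ∀ j, m ≤ g^[j] m := fun j => Function.id_le_iterate_of_id_le hg j m
  have key : ∀ j, (∀ x, f x ≤ g^[j] m) ∨ j + 1 ≤ #(S j) := by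
    intro j
    induction j with
    | zero => exact Or.inr (card_pos.2 ⟨z, (hmem 0 z).2 hz⟩)
    | succ j ih =>
      have hstep : g^[j] m ≤ g^[j + 1] m := by
        rw [Function.iterate_succ_apply']; exact hg _
      by_cases hall : ∀ x, f x ≤ g^[j] m
      · exact Or.inl fun x => (hall x).trans hstep
      obtain ⟨y, hyB, hyg⟩ := hgap _ ⟨z, hz.trans (hiter j)⟩ (by simpa using hall)
      have hsub : S j ⊂ S (j + 1) := by
        refine (ssubset_iff_of_subset fun x hx => ?_).2 ⟨y, ?_, ?_⟩
        · exact (hmem _ x).2 (((hmem j x).1 hx).trans hstep)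
        · exact (hmem _ y).2 (by rwa [Function.iterate_succ_apply'])
        · exact fun hy => ((hmem j y).1 hy).not_gt hyB
      exact Or.inr ((ih.resolve_left hall).trans_lt (card_lt_card hsub))
  have hcard : 0 < Fintype.card ι := Fintype.card_pos_iff.2 ⟨z⟩
  rcases key (Fintype.card ι - 1) with hall | hbig
  · exact hall x
  · have huniv : S (Fintype.card ι - 1) = univ :=
      eq_univ_of_card _ (le_antisymm (card_le_univ _) (by omega))
    exact (hmem _ x).1 (huniv ▸ mem_univ x)

theorem exists_pos_le_of_pos {α : Type*} [Finite α] (f : α → ℝ) :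
    ∃ w > 0, ∀ a, 0 < f a → w ≤ f a := by
  by_cases hne : Nonempty {a // 0 < f a}
  · obtain ⟨⟨a, ha⟩, hmin⟩ := Finite.exists_min fun a : {a // 0 < f a} => f a
    exact ⟨f a, ha, fun b hb => hmin ⟨b, hb⟩⟩
  · exact ⟨1, one_pos, fun a ha => (hne ⟨⟨a, ha⟩⟩).elim⟩

theorem exists_le_of_mul_exp_le {a : ℝ} (ha : 0 < a) (b D : ℝ) :
    ∃ C, ∀ t, a * Real.exp t ≤ b * t + D → t ≤ C := by
  have hdiv : Tendsto (fun t => a * (Real.exp t / t) - b) atTop atTop := by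
    simpa [sub_eq_add_neg] using
      tendsto_atTop_add_const_right _ (-b) ((tendsto_exp_div_pow_atTop 1).const_mul_atTop ha)
  have hgrowth : Tendsto (fun t => a * Real.exp t - b * t) atTop atTop := by
    refine (tendsto_id.atTop_mul_atTop₀ hdiv).congr' ?_
    filter_upwards [eventually_gt_atTop 0] with t ht
    simp only [id]
    field_simp
  obtain ⟨C, hC⟩ := (hgrowth.eventually_gt_atTop D).exists_forall_of_atTop
  exact ⟨C, fun t ht => le_of_not_gt fun hCt => by linarith [hC t hCt.le]⟩

theorem exists_subseq_tendsto_atBot {a : ℕ → ℝ} (ha : ∀ A, ∃ᶠ n in atTop, a n < A) :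
    ∃ φ : ℕ → ℕ, StrictMono φ ∧ Tendsto (a ∘ φ) atTop atBot := by
  obtain ⟨φ, hφ, hlt⟩ := extraction_forall_of_frequently fun k : ℕ => ha (-k)
  exact ⟨φ, hφ, tendsto_atBot_mono (fun k => (hlt k).le)
    (tendsto_neg_atTop_atBot.comp tendsto_natCast_atTop_atTop)⟩

theorem graphConn.exists_boundary_edge {V : Type*} {ω : V → V → ℝ} (hconn : graphConn ω)
    {T : Set V} {x y : V} (hx : x ∈ T) (hy : y ∉ T) : ∃ a ∈ T, ∃ b ∉ T, 0 < ω a b := by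
  obtain ⟨m, p, rfl, rfl, hp⟩ := hconn _ _ (ne_of_mem_of_not_mem hx hy)
  by_contra! hT
  have hpath : ∀ i ≤ m, p i ∈ T := by
    intro i hi
    induction i with
    | zero => exact hx
    | succ i ih =>
      by_contra hnot
      exact (hT _ (ih (by omega)) _ hnot).not_gt (hp i (by omega))
  exact hy (hpath m le_rfl)

section GraphLaplacian

variable {V : Type*} [Fintype V] {ω : V → V → ℝ} {μ : V → ℝ}

theorem mul_graphLap {x : V} (hμ : μ x ≠ 0) (u : V → ℝ) :
    μ x * graphLap ω μ u x = ∑ y, ω x y * (u y - u x) := by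
  rw [graphLap, one_div, ← mul_assoc, mul_inv_cancel₀ hμ, one_mul]

theorem sum_mul_neg_graphLap [DecidableEq V] (hsymm : ∀ x y, ω x y = ω y x)
    (hμ : ∀ x, μ x ≠ 0) (u : V → ℝ) (T : Finset V) :
    ∑ x ∈ T, μ x * -graphLap ω μ u x = ∑ x ∈ T, ∑ y ∈ Tᶜ, ω x y * (u x - u y) := by
  have hrow : ∀ x, μ x * -graphLap ω μ u x = ∑ y, ω x y * (u x - u y) := fun x => by
    rw [mul_neg, mul_graphLap (hμ x), ← sum_neg_distrib]
    exact sum_congr rfl fun y _ => by ring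
  simp only [hrow, ← sum_add_sum_compl T (fun y => ω _ y * (u _ - u y)), sum_add_distrib,
    T.sum_sum_eq_zero_of_antisymm (f := fun x y => ω x y * (u x - u y))
      fun x y => by rw [hsymm]; ring, zero_add]

theorem mul_sub_le_sum_mul_neg_graphLap [DecidableEq V] (hsymm : ∀ x y, ω x y = ω y x)
    (hnonneg : ∀ x y, 0 ≤ ω x y) (hμ : ∀ x, μ x ≠ 0) {u : V → ℝ} (T : Finset V)
    (hT : ∀ x ∈ T, ∀ y ∈ Tᶜ, u y ≤ u x) {a b : V} (ha : a ∈ T) (hb : b ∈ Tᶜ) :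
    ω a b * (u a - u b) ≤ ∑ x ∈ T, μ x * -graphLap ω μ u x := by
  rw [sum_mul_neg_graphLap hsymm hμ u T]
  have hnn : ∀ x ∈ T, ∀ y ∈ Tᶜ, 0 ≤ ω x y * (u x - u y) := fun x hx y hy =>
    mul_nonneg (hnonneg x y) (sub_nonneg.2 (hT x hx y hy))
  calc ω a b * (u a - u b) ≤ ∑ y ∈ Tᶜ, ω a y * (u a - u y) := single_le_sum (hnn a ha) hb
    _ ≤ ∑ x ∈ T, ∑ y ∈ Tᶜ, ω x y * (u x - u y) :=
        single_le_sum (f := fun x => ∑ y ∈ Tᶜ, ω x y * (u x - u y))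
          (fun x hx => sum_nonneg (hnn x hx)) ha

theorem sum_mul_graphLap_eq_zero (hsymm : ∀ x y, ω x y = ω y x) (hμ : ∀ x, μ x ≠ 0)
    (u : V → ℝ) : ∑ x, μ x * graphLap ω μ u x = 0 := by
  classical
  have := sum_mul_neg_graphLap hsymm hμ u univ
  simp only [compl_univ, sum_empty, sum_const_zero, mul_neg, sum_neg_distrib] at this
  linarith

theorem graphLap_nonpos_of_isMax (hnonneg : ∀ x y, 0 ≤ ω x y) {u : V → ℝ} {x : V}
    (hμ : 0 < μ x) (hmax : ∀ y, u y ≤ u x) : graphLap ω μ u x ≤ 0 :=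
  mul_nonpos_of_nonneg_of_nonpos (by positivity)
    (sum_nonpos fun y _ => mul_nonpos_of_nonneg_of_nonpos (hnonneg x y) (by linarith [hmax y]))

theorem neg_graphLap_le_of_le (hnonneg : ∀ x y, 0 ≤ ω x y) {u : V → ℝ} {x : V} {t : ℝ}
    (hμ : 0 < μ x) (ht : ∀ y, t ≤ u y) :
    -graphLap ω μ u x ≤ (∑ y, ω x y) / μ x * (u x - t) := by
  have hsum : ∑ y, ω x y * (t - u x) ≤ ∑ y, ω x y * (u y - u x) :=
    sum_le_sum fun y _ => mul_le_mul_of_nonneg_left (by linarith [ht y]) (hnonneg x y)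
  have hdiv := div_le_div_of_nonneg_right hsum hμ.le
  rw [← sum_mul] at hdiv
  rw [graphLap, one_div_mul_eq_div]
  linarith [show (∑ y, ω x y) * (t - u x) / μ x = -((∑ y, ω x y) / μ x * (u x - t)) by ring]

end GraphLaplacian

section Solution

variable {V : Type*} [Fintype V] {ω : V → V → ℝ} {μ : V → ℝ}

theorem sum_mul_neg_graphLap_le_of_solution [DecidableEq V] (hsymm : ∀ x y, ω x y = ω y x)
    (hμ : ∀ x, 0 < μ x) {u h : V → ℝ} {c K : ℝ} (hc : |c| ≤ K) (hh : ∀ x, |h x| ≤ K)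
    (heq : ∀ x, -graphLap ω μ u x = h x * Real.exp (u x) - c) {B : ℝ} (T : Finset V)
    (hTc : ∀ x ∈ Tᶜ, u x ≤ B) :
    ∑ x ∈ T, μ x * -graphLap ω μ u x ≤ K * (1 + Real.exp B) * ∑ y, μ y := by
  have hK : 0 ≤ K := (abs_nonneg c).trans hc
  have hsource_le : ∀ x ∈ Tᶜ, c - h x * Real.exp (u x) ≤ K * (1 + Real.exp B) := by
    intro x hx
    have habs : -h x * Real.exp (u x) ≤ |h x| * Real.exp (u x) :=
      mul_le_mul_of_nonneg_right (neg_le_abs _) (Real.exp_pos _).le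
    have hK' : |h x| * Real.exp (u x) ≤ K * Real.exp B :=
      mul_le_mul (hh x) (Real.exp_le_exp.2 (hTc x hx)) (Real.exp_pos _).le hK
    linarith [le_abs_self c]
  have htotal := sum_mul_graphLap_eq_zero hsymm (fun x => (hμ x).ne') u
  rw [← sum_add_sum_compl T] at htotal
  calc ∑ x ∈ T, μ x * -graphLap ω μ u x
      = ∑ x ∈ Tᶜ, μ x * (c - h x * Real.exp (u x)) := by
        simp only [mul_neg, sum_neg_distrib]
        rw [eq_neg_of_add_eq_zero_left htotal, neg_neg]
        exact sum_congr rfl fun x _ => by rw [← neg_neg (graphLap ω μ u x), heq x]; ring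
    _ ≤ ∑ x ∈ Tᶜ, μ x * (K * (1 + Real.exp B)) :=
        sum_le_sum fun x hx => mul_le_mul_of_nonneg_left (hsource_le x hx) (hμ x).le
    _ ≤ ∑ x, μ x * (K * (1 + Real.exp B)) :=
        sum_le_sum_of_subset_of_nonneg (subset_univ _) fun x _ _ => by
          have := hμ x; positivity
    _ = K * (1 + Real.exp B) * ∑ y, μ y := by rw [← sum_mul, mul_comm]

/-- The flux across an edge leaving `{u > B}` is bounded by the source on `{u ≤ B}`. -/
theorem exists_lt_le_add_of_solution (hsymm : ∀ x y, ω x y = ω y x) (hnonneg : ∀ x y, 0 ≤ ω x y)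
    (hconn : graphConn ω) (hμ : ∀ x, 0 < μ x) {w₀ : ℝ} (hw₀ : 0 < w₀)
    (hw : ∀ a b, 0 < ω a b → w₀ ≤ ω a b) {u h : V → ℝ} {c K : ℝ} (hc : |c| ≤ K)
    (hh : ∀ x, |h x| ≤ K) (heq : ∀ x, -graphLap ω μ u x = h x * Real.exp (u x) - c)
    {B : ℝ} (hz : ∃ z, u z ≤ B) (hx : ∃ x, B < u x) :
    ∃ x, B < u x ∧ u x ≤ B + K * (1 + Real.exp B) * (∑ y, μ y) / w₀ := by
  classical
  obtain ⟨z, hz⟩ := hz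
  obtain ⟨x, hx⟩ := hx
  set T : Finset V := univ.filter fun x => B < u x with hT
  have hmemT : ∀ x, x ∈ T ↔ B < u x := by simp [hT]
  have hmemTc : ∀ x, x ∈ Tᶜ ↔ u x ≤ B := by simp [hT]
  obtain ⟨a, ha, b, hb, hab⟩ := hconn.exists_boundary_edge (T := (T : Set V))
    (mem_coe.2 ((hmemT x).2 hx)) fun hzT => ((hmemT z).1 (mem_coe.1 hzT)).not_ge hz
  rw [mem_coe] at ha hb
  rw [← mem_compl] at hb
  have hflux := mul_sub_le_sum_mul_neg_graphLap hsymm hnonneg (fun x => (hμ x).ne') T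
    (fun x hx y hy => ((hmemTc y).1 hy).trans ((hmemT x).1 hx).le) ha hb
  have hsource := sum_mul_neg_graphLap_le_of_solution hsymm hμ hc hh heq T
    fun x hx => (hmemTc x).1 hx
  refine ⟨a, (hmemT a).1 ha, ?_⟩
  have hgap : u a - u b ≤ K * (1 + Real.exp B) * (∑ y, μ y) / w₀ := by
    rw [le_div_iff₀ hw₀]
    nlinarith [hw a b hab, (hmemT a).1 ha, (hmemTc b).1 hb]
  linarith [(hmemTc b).1 hb]

theorem le_iterate_of_solution (hsymm : ∀ x y, ω x y = ω y x) (hnonneg : ∀ x y, 0 ≤ ω x y)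
    (hconn : graphConn ω) (hμ : ∀ x, 0 < μ x) {w₀ : ℝ} (hw₀ : 0 < w₀)
    (hw : ∀ a b, 0 < ω a b → w₀ ≤ ω a b) {u h : V → ℝ} {c K : ℝ} (hc : |c| ≤ K)
    (hh : ∀ x, |h x| ≤ K) (heq : ∀ x, -graphLap ω μ u x = h x * Real.exp (u x) - c)
    {m : ℝ} (hm : ∃ z, u z ≤ m) (x : V) :
    u x ≤ (fun t => t + K * (1 + Real.exp t) * (∑ y, μ y) / w₀)^[Fintype.card V - 1] m := by
  obtain ⟨z, hz⟩ := hm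
  have hK : 0 ≤ K := (abs_nonneg c).trans hc
  have hvol : 0 ≤ ∑ y, μ y := sum_nonneg fun y _ => (hμ y).le
  exact forall_le_iterate_of_exists_lt_le u _ (fun t => le_add_of_nonneg_right (by positivity))
    (fun B => exists_lt_le_add_of_solution hsymm hnonneg hconn hμ hw₀ hw hc hh heq) hz x

theorem exists_lower_bound_of_le_iSup [Nonempty V] (hsymm : ∀ x y, ω x y = ω y x)
    (hnonneg : ∀ x y, 0 ≤ ω x y) (hconn : graphConn ω) (hμ : ∀ x, 0 < μ x) (K A : ℝ) :
    ∃ t₀, ∀ (u h : V → ℝ) (c : ℝ), |c| ≤ K → (∀ x, |h x| ≤ K) →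
      (∀ x, -graphLap ω μ u x = h x * Real.exp (u x) - c) → A ≤ ⨆ x, u x → ∀ x, t₀ ≤ u x := by
  obtain ⟨w₀, hw₀, hw⟩ := exists_pos_le_of_pos fun p : V × V => ω p.1 p.2
  set g : ℝ → ℝ := fun t => t + K * (1 + Real.exp t) * (∑ y, μ y) / w₀
  have hg : Tendsto g atBot atBot :=
    tendsto_id.atBot_add
      ((((Real.tendsto_exp_atBot.const_add 1).const_mul K).mul_const _).div_const _)
  obtain ⟨t₀, ht₀⟩ := ((hg.iterate (Fintype.card V - 1)).eventually (eventually_lt_atBot A)).exists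
  refine ⟨t₀, fun u h c hc hh heq hA x => le_of_not_gt fun hx => ?_⟩
  have hmax : ⨆ y, u y ≤ g^[Fintype.card V - 1] t₀ :=
    ciSup_le (le_iterate_of_solution hsymm hnonneg hconn hμ hw₀ (fun a b => hw (a, b)) hc hh heq
      ⟨x, hx.le⟩)
  linarith

end Solution

theorem exists_uniform_bound_of_tendsto {V : Type*} [Fintype V] {hseq : ℕ → V → ℝ}
    {cseq : ℕ → ℝ} {h : V → ℝ} {c : ℝ}
    (hconv : ∀ x, Tendsto (fun n => hseq n x) atTop (𝓝 (h x))) (cconv : Tendsto cseq atTop (𝓝 c)) :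
    ∃ K, ∀ n, |cseq n| ≤ K ∧ ∀ x, |hseq n x| ≤ K := by
  obtain ⟨K, hK⟩ := (cconv.prodMk_nhds (tendsto_pi_nhds.2 hconv)).norm.bddAbove_range
  refine ⟨K, fun n => ⟨?_, fun x => ?_⟩⟩
  · exact (norm_fst_le (cseq n, hseq n)).trans (hK ⟨n, rfl⟩)
  · exact ((norm_le_pi_norm (hseq n) x).trans (norm_snd_le (cseq n, hseq n))).trans (hK ⟨n, rfl⟩)

section Sequence

variable {V : Type*} [Fintype V] {ω : V → V → ℝ} {μ : V → ℝ} {u hseq : ℕ → V → ℝ}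
  {cseq : ℕ → ℝ} {h : V → ℝ} {c : ℝ}

/-- Once `uₙ ≥ t₀`, the bound `-Δuₙ(x) ≤ deg x / μ x * (uₙ(x) - t₀)` makes
`hₙ(x) e^{uₙ(x)}` grow at most linearly in `uₙ(x)`, which bounds `uₙ(x)` where `h(x) > 0`. -/
theorem exists_upper_bound_of_pos (hnonneg : ∀ x y, 0 ≤ ω x y) (hμ : ∀ x, 0 < μ x)
    (heq : ∀ n x, -graphLap ω μ (u n) x = hseq n x * Real.exp (u n x) - cseq n)
    (hconv : ∀ x, Tendsto (fun n => hseq n x) atTop (𝓝 (h x))) {K t₀ : ℝ}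
    (hcK : ∀ n, cseq n ≤ K) (hlow : ∀ᶠ n in atTop, ∀ x, t₀ ≤ u n x) :
    ∃ C, ∀ᶠ n in atTop, ∀ x, 0 < h x → u n x ≤ C := by
  have hpoint : ∀ x, ∃ C, ∀ᶠ n in atTop, 0 < h x → u n x ≤ C := by
    intro x
    by_cases hx : 0 < h x
    · set d := (∑ y, ω x y) / μ x
      obtain ⟨C, hC⟩ := exists_le_of_mul_exp_le (half_pos hx) d (K - d * t₀)
      refine ⟨C, ?_⟩
      filter_upwards [hlow, (hconv x).eventually (eventually_ge_nhds (half_lt_self hx))]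
        with n hlow hhalf _
      apply hC
      have hlap := neg_graphLap_le_of_le hnonneg (hμ x) hlow (x := x)
      have hexp := mul_le_mul_of_nonneg_right hhalf (Real.exp_pos (u n x)).le
      linarith [heq n x, hcK n]
    · exact ⟨0, Eventually.of_forall fun n hx' => absurd hx' hx⟩
  choose C hC using hpoint
  obtain ⟨C₀, hC₀⟩ := Finite.exists_le C
  exact ⟨C₀, (eventually_all.2 hC).mono fun n hn x hx => (hn x hx).trans (hC₀ x)⟩

/-- At a maximum point `Δuₙ ≤ 0`, so `cₙ e^{-uₙ} ≤ hₙ` there. -/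
theorem nonneg_of_tendsto_atTop_of_isMax (hnonneg : ∀ x y, 0 ≤ ω x y) (hμ : ∀ x, 0 < μ x)
    (heq : ∀ n x, -graphLap ω μ (u n) x = hseq n x * Real.exp (u n x) - cseq n)
    (hconv : ∀ x, Tendsto (fun n => hseq n x) atTop (𝓝 (h x)))
    (cconv : Tendsto cseq atTop (𝓝 c)) {φ : ℕ → ℕ} (hφ : StrictMono φ) {x₀ : V}
    (hmax : ∀ k y, u (φ k) y ≤ u (φ k) x₀) (hblow : Tendsto (fun k => u (φ k) x₀) atTop atTop) :
    0 ≤ h x₀ := by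
  have hle : ∀ k, cseq (φ k) * Real.exp (-u (φ k) x₀) ≤ hseq (φ k) x₀ := by
    intro k
    rw [Real.exp_neg, ← div_eq_mul_inv, div_le_iff₀ (Real.exp_pos _)]
    linarith [graphLap_nonpos_of_isMax hnonneg (hμ x₀) (hmax k), heq (φ k) x₀]
  have hlim : Tendsto (fun k => cseq (φ k) * Real.exp (-u (φ k) x₀)) atTop (𝓝 (c * 0)) :=
    (cconv.comp hφ.tendsto_atTop).mul
      (Real.tendsto_exp_atBot.comp (tendsto_neg_atTop_atBot.comp hblow))
  simpa using le_of_tendsto_of_tendsto' hlim ((hconv x₀).comp hφ.tendsto_atTop) hle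

theorem exists_subseq_blowup [Nonempty V] (hnonneg : ∀ x y, 0 ≤ ω x y) (hμ : ∀ x, 0 < μ x)
    (heq : ∀ n x, -graphLap ω μ (u n) x = hseq n x * Real.exp (u n x) - cseq n)
    (hconv : ∀ x, Tendsto (fun n => hseq n x) atTop (𝓝 (h x)))
    (cconv : Tendsto cseq atTop (𝓝 c)) {t₀ C : ℝ} (hlow : ∀ᶠ n in atTop, ∀ x, t₀ ≤ u n x)
    (hup : ∀ᶠ n in atTop, ∀ x, 0 < h x → u n x ≤ C)
    (hunbdd : ∀ B, ∃ᶠ n in atTop, B < ⨆ x, u n x) :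
    ∃ φ : ℕ → ℕ, StrictMono φ ∧
      ∃ x₀ : V, h x₀ = 0 ∧ Tendsto (fun k => u (φ k) x₀) atTop atTop ∧
        (∃ C : ℝ, ∀ k x, -C ≤ u (φ k) x) ∧ (∃ C : ℝ, ∀ k x, 0 < h x → u (φ k) x ≤ C) := by
  obtain ⟨φ, hφ, hφP⟩ := extraction_forall_of_frequently fun k : ℕ =>
    (hunbdd k).and_eventually (hlow.and hup)
  obtain ⟨x₀, hx₀⟩ : ∃ x₀, ∃ᶠ k in atTop, ∀ y, u (φ k) y ≤ u (φ k) x₀ :=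
    frequently_exists.1 (Frequently.of_forall fun k => Finite.exists_max (u (φ k)))
  obtain ⟨ψ, hψ, hψmax⟩ := extraction_of_frequently_atTop hx₀
  have hblow : Tendsto (fun k => u (φ (ψ k)) x₀) atTop atTop :=
    tendsto_atTop_mono (fun k => ((hφP (ψ k)).1.trans_le (ciSup_le (hψmax k))).le)
      (tendsto_natCast_atTop_atTop.comp hψ.tendsto_atTop)
  have hpos : ¬ 0 < h x₀ := fun hpos => by
    obtain ⟨k, hk⟩ := (hblow.eventually_gt_atTop C).exists
    exact hk.not_ge ((hφP (ψ k)).2.2 x₀ hpos)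
  refine ⟨φ ∘ ψ, hφ.comp hψ, x₀, le_antisymm (not_lt.1 hpos)
    (nonneg_of_tendsto_atTop_of_isMax hnonneg hμ heq hconv cconv (hφ.comp hψ) hψmax hblow),
    hblow, ⟨-t₀, fun k x => by simpa using (hφP (ψ k)).2.1 x⟩, ⟨C, fun k => (hφP (ψ k)).2.2⟩⟩

end Sequence

open Filter in
/-- Discrete Brezis–Merle blow-up alternatives for sequences of solutions of
`−Δuₙ = hₙ e^{uₙ} − cₙ` with `hₙ → h` and `cₙ → c`. -/
theorem blow_up_alternatives {V : Type*} [Fintype V] [Nonempty V]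
    (ω : V → V → ℝ) (μ : V → ℝ)
    (hsymm : ∀ x y, ω x y = ω y x)
    (hnonneg : ∀ x y, 0 ≤ ω x y)
    (hconn : graphConn ω)
    (hμ : ∀ x, 0 < μ x)
    (u : ℕ → V → ℝ) (hseq : ℕ → V → ℝ) (cseq : ℕ → ℝ) (h : V → ℝ) (c : ℝ)
    (heq : ∀ n x, -graphLap ω μ (u n) x = hseq n x * Real.exp (u n x) - cseq n)
    (hconv : ∀ x, Tendsto (fun n => hseq n x) atTop (nhds (h x)))
    (cconv : Tendsto cseq atTop (nhds c)) :
    ∃ φ : ℕ → ℕ, StrictMono φ ∧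
      ((∃ C : ℝ, ∀ k x, |u (φ k) x| ≤ C) ∨
       (Tendsto (fun k => ⨆ x, u (φ k) x) atTop atBot) ∨
       (∃ x₀ : V, h x₀ = 0 ∧ Tendsto (fun k => u (φ k) x₀) atTop atTop ∧
         (∃ C : ℝ, ∀ k x, -C ≤ u (φ k) x) ∧
         (∃ C : ℝ, ∀ k x, 0 < h x → u (φ k) x ≤ C))) := by
  obtain ⟨K, hK⟩ := exists_uniform_bound_of_tendsto hconv cconv
  by_cases hbelow : ∃ A, ∀ᶠ n in atTop, A ≤ ⨆ x, u n x
  · obtain ⟨A, hA⟩ := hbelow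
    obtain ⟨t₀, ht₀⟩ := exists_lower_bound_of_le_iSup hsymm hnonneg hconn hμ K A
    have hlow : ∀ᶠ n in atTop, ∀ x, t₀ ≤ u n x :=
      hA.mono fun n hn => ht₀ _ _ _ (hK n).1 (hK n).2 (heq n) hn
    obtain ⟨C, hup⟩ := exists_upper_bound_of_pos hnonneg hμ heq hconv
      (fun n => (le_abs_self _).trans (hK n).1) hlow
    by_cases habove : ∃ B, ∀ᶠ n in atTop, ⨆ x, u n x ≤ B
    · obtain ⟨B, hB⟩ := habove
      obtain ⟨φ, hφ, hφb⟩ := extraction_of_eventually_atTop (hlow.and hB)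
      refine ⟨φ, hφ, Or.inl ⟨max B (-t₀), fun k x => abs_le.2 ⟨?_, ?_⟩⟩⟩
      · linarith [(hφb k).1 x, le_max_right B (-t₀)]
      · linarith [le_ciSup (Finite.bddAbove_range (u (φ k))) x, (hφb k).2, le_max_left B (-t₀)]
    · simp only [not_exists, not_eventually, not_le] at habove
      obtain ⟨φ, hφ, hblow⟩ := exists_subseq_blowup hnonneg hμ heq hconv cconv hlow hup habove
      exact ⟨φ, hφ, Or.inr (Or.inr hblow)⟩
  · simp only [not_exists, not_eventually, not_le] at hbelow
    obtain ⟨φ, hφ, hφM⟩ := exists_subseq_tendsto_atBot hbelow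
    exact ⟨φ, hφ, Or.inr (Or.inl hφM)⟩
end

section
/- Solvability in the positive case: Let h : V → ℝ and c > 0. Then there exists a function u : V → ℝ satisfying −Δu(x) = h(x)e^{u(x)} − c for all x ∈ V if and only if max_{x∈V} h(x) > 0. -/
open Finset Real

/-!
Necessity: summing the equation against `μ`, the Laplacian integrates to zero on a symmetric
graph, so `∫ h e^u dμ = c |V| > 0` and `h` is positive somewhere.

Sufficiency is variational. Minimise `J(u) = ½∫|∇u|² + c∫u` on the level set
`M = {∫ h e^u = c |V|}`, which is nonempty once `h(x₀) > 0`. On `M` the functional is coercive: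
on a connected graph the oscillation of `u` is at most `C √(∫|∇u|²)`, the constraint forces
`max u ≥ log (c |V| / ∫ |h|)`, and `J` bounds `min u` from above. Since adding a constant `s`
multiplies `∫ h e^u` by `e^s` and adds `c |V| s` to `J`, the function
`J(u) - c |V| log ∫ h e^u` has an unconstrained local minimum at the minimiser `u₀`; its first
variation in the direction `δ_z` is `μ(z) (c - Δu₀(z) - h(z) e^{u₀(z)})`.
-/

section

variable {V : Type*} [Fintype V]

/-- `dirichletForm ω u v = ∫_V Γ(u,v) dμ` for every positive measure `μ`. -/
noncomputable def dirichletForm (ω : V → V → ℝ) (u v : V → ℝ) : ℝ :=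
  (1 / 2) * ∑ x, ∑ y, ω x y * (u y - u x) * (v y - v x)

noncomputable def expIntegral (μ h u : V → ℝ) : ℝ :=
  graphInt μ fun x => h x * exp (u x)

noncomputable def kwEnergy (ω : V → V → ℝ) (μ : V → ℝ) (c : ℝ) (u : V → ℝ) : ℝ :=
  dirichletForm ω u u / 2 + c * graphInt μ u

section Green

variable {ω : V → V → ℝ} {μ : V → ℝ}

theorem sum_mul_sum_sub_eq_neg_dirichletForm (hsymm : ∀ x y, ω x y = ω y x) (u φ : V → ℝ) :
    ∑ x, φ x * ∑ y, ω x y * (u y - u x) = -dirichletForm ω u φ := by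
  have hswap : ∑ x, ∑ y, ω x y * (u y - u x) * φ y = -∑ x, ∑ y, ω x y * (u y - u x) * φ x := by
    rw [Finset.sum_comm, ← Finset.sum_neg_distrib]
    refine Finset.sum_congr rfl fun x _ => ?_
    rw [← Finset.sum_neg_distrib]
    refine Finset.sum_congr rfl fun y _ => ?_
    rw [hsymm]; ring
  have hsplit : dirichletForm ω u φ = (1 / 2) * (∑ x, ∑ y, ω x y * (u y - u x) * φ y
      - ∑ x, ∑ y, ω x y * (u y - u x) * φ x) := by
    simp only [dirichletForm, mul_sub, Finset.sum_sub_distrib]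
  rw [hsplit, hswap, Finset.sum_congr rfl fun x _ => Finset.mul_sum _ _ _]
  simp only [mul_comm (φ _)]
  ring

theorem graphInt_mul_graphLap (hsymm : ∀ x y, ω x y = ω y x) (hμ : ∀ x, μ x ≠ 0)
    (u φ : V → ℝ) :
    graphInt μ (fun x => φ x * graphLap ω μ u x) = -dirichletForm ω u φ := by
  rw [← sum_mul_sum_sub_eq_neg_dirichletForm hsymm, graphInt]
  refine Finset.sum_congr rfl fun x _ => ?_
  rw [graphLap]
  field_simp [hμ x]

theorem graphInt_graphLap (hsymm : ∀ x y, ω x y = ω y x) (hμ : ∀ x, μ x ≠ 0) (u : V → ℝ) :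
    graphInt μ (graphLap ω μ u) = 0 := by
  simpa [dirichletForm] using graphInt_mul_graphLap hsymm hμ u 1

end Green

theorem exists_pos_of_neg_graphLap_eq {ω : V → V → ℝ} {μ h u : V → ℝ} {c : ℝ}
    [Nonempty V] (hsymm : ∀ x y, ω x y = ω y x) (hμ : ∀ x, 0 < μ x) (hc : 0 < c)
    (hu : ∀ x, -graphLap ω μ u x = h x * exp (u x) - c) :
    ∃ x, 0 < h x := by
  have hint : ∑ x, (h x * exp (u x) - c) * μ x = 0 := by
    simpa [graphInt, ← hu] using graphInt_graphLap hsymm (fun x => (hμ x).ne') u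
  have hpos : 0 < ∑ x, h x * exp (u x) * μ x := by
    have hvol : 0 < ∑ x, c * μ x := Finset.sum_pos (fun x _ => mul_pos hc (hμ x)) univ_nonempty
    simp only [sub_mul, Finset.sum_sub_distrib] at hint
    linarith
  obtain ⟨x, -, hx⟩ := Finset.exists_lt_of_sum_lt (f := fun _ => (0 : ℝ)) (by simpa using hpos)
  exact ⟨x, pos_of_mul_pos_left (pos_of_mul_pos_left hx (hμ x).le) (exp_pos _).le⟩

section Shift

variable (ω : V → V → ℝ) (μ h u : V → ℝ) (c s : ℝ)

theorem dirichletForm_add_const :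
    dirichletForm ω (fun x => u x + s) (fun x => u x + s) = dirichletForm ω u u := by
  simp only [dirichletForm, add_sub_add_right_eq_sub]

theorem graphInt_add_const : graphInt μ (fun x => u x + s) = graphInt μ u + s * ∑ x, μ x := by
  simp only [graphInt, add_mul, Finset.sum_add_distrib, Finset.mul_sum]

theorem kwEnergy_add_const :
    kwEnergy ω μ c (fun x => u x + s) = kwEnergy ω μ c u + c * (∑ x, μ x) * s := by
  rw [kwEnergy, kwEnergy, dirichletForm_add_const, graphInt_add_const]
  ring

theorem expIntegral_add_const :
    expIntegral μ h (fun x => u x + s) = exp s * expIntegral μ h u := by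
  simp only [expIntegral, graphInt, exp_add, Finset.mul_sum]
  exact Finset.sum_congr rfl fun x _ => by ring

end Shift

section Derivative

variable (ω : V → V → ℝ) (μ h u φ : V → ℝ)

theorem hasDerivAt_dirichletForm_self :
    HasDerivAt (fun t : ℝ => dirichletForm ω (fun x => u x + t * φ x) (fun x => u x + t * φ x))
      (2 * dirichletForm ω u φ) 0 := by
  have hpoly : ∀ t : ℝ, dirichletForm ω (fun x => u x + t * φ x) (fun x => u x + t * φ x)
      = dirichletForm ω u u + t * (2 * dirichletForm ω u φ) + t ^ 2 * dirichletForm ω φ φ := by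
    intro t
    simp only [dirichletForm, Finset.mul_sum, ← Finset.sum_add_distrib]
    exact Finset.sum_congr rfl fun x _ => Finset.sum_congr rfl fun y _ => by ring
  simp only [hpoly]
  simpa using (((hasDerivAt_id (0 : ℝ)).mul_const _).const_add _).fun_add
    ((hasDerivAt_pow 2 (0 : ℝ)).mul_const (dirichletForm ω φ φ))

theorem hasDerivAt_graphInt :
    HasDerivAt (fun t : ℝ => graphInt μ fun x => u x + t * φ x) (graphInt μ φ) 0 := by
  simp only [graphInt]
  simpa using HasDerivAt.fun_sum fun x _ =>
    (((hasDerivAt_id (0 : ℝ)).mul_const (φ x)).const_add (u x)).mul_const (μ x)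

theorem hasDerivAt_expIntegral :
    HasDerivAt (fun t : ℝ => expIntegral μ h fun x => u x + t * φ x)
      (graphInt μ fun x => φ x * (h x * exp (u x))) 0 := by
  simp only [expIntegral, graphInt]
  refine HasDerivAt.fun_sum fun x _ => ?_
  have := ((((hasDerivAt_id (0 : ℝ)).mul_const (φ x)).const_add (u x)).exp.const_mul
    (h x)).mul_const (μ x)
  exact this.congr_deriv (by simp only [id, zero_mul, add_zero, one_mul]; ring)

end Derivative

theorem graphInt_single_mul [DecidableEq V] (μ f : V → ℝ) (z : V) :
    graphInt μ (fun x => (Pi.single z 1 : V → ℝ) x * f x) = f z * μ z := by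
  simp [graphInt, Pi.single_apply]

section EulerLagrange

variable {ω : V → V → ℝ} {μ h : V → ℝ} {c : ℝ}

theorem hasDerivAt_kwEnergy (hsymm : ∀ x y, ω x y = ω y x) (hμ : ∀ x, μ x ≠ 0)
    (u φ : V → ℝ) :
    HasDerivAt (fun t : ℝ => kwEnergy ω μ c fun x => u x + t * φ x)
      (graphInt μ fun x => φ x * (c - graphLap ω μ u x)) 0 := by
  have hint : (graphInt μ fun x => φ x * (c - graphLap ω μ u x))
      = 2 * dirichletForm ω u φ / 2 + c * graphInt μ φ := by
    have := graphInt_mul_graphLap hsymm hμ u φ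
    simp only [graphInt, mul_sub, sub_mul, Finset.sum_sub_distrib, Finset.mul_sum] at this ⊢
    rw [this]
    simp only [mul_comm, mul_left_comm]
    ring
  rw [hint]
  exact ((hasDerivAt_dirichletForm_self ω u φ).div_const 2).add
    ((hasDerivAt_graphInt μ u φ).const_mul c)

theorem kwEnergy_le_of_isMinOn {u₀ u : V → ℝ} (hq : 0 < c * ∑ x, μ x)
    (hmin : IsMinOn (kwEnergy ω μ c) {v | expIntegral μ h v = c * ∑ x, μ x} u₀)
    (hu : 0 < expIntegral μ h u) :
    kwEnergy ω μ c u₀ ≤ kwEnergy ω μ c u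
      + c * (∑ x, μ x) * (log (c * ∑ x, μ x) - log (expIntegral μ h u)) := by
  set s := log (c * ∑ x, μ x) - log (expIntegral μ h u)
  have hmem : expIntegral μ h (fun x => u x + s) = c * ∑ x, μ x := by
    rw [expIntegral_add_const, exp_sub, exp_log hq, exp_log hu]
    field_simp
  rw [← kwEnergy_add_const]
  exact hmin hmem

theorem neg_graphLap_eq_of_isMinOn [Nonempty V] (hsymm : ∀ x y, ω x y = ω y x)
    (hμ : ∀ x, 0 < μ x) (hc : 0 < c) {u₀ : V → ℝ}
    (hu₀ : expIntegral μ h u₀ = c * ∑ x, μ x)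
    (hmin : IsMinOn (kwEnergy ω μ c) {v | expIntegral μ h v = c * ∑ x, μ x} u₀) (z : V) :
    -graphLap ω μ u₀ z = h z * exp (u₀ z) - c := by
  classical
  set q := c * ∑ x, μ x
  have hq : 0 < q := mul_pos hc (Finset.sum_pos (fun x _ => hμ x) univ_nonempty)
  set φ : V → ℝ := Pi.single z 1
  set F : ℝ → ℝ := fun t =>
    kwEnergy ω μ c (fun x => u₀ x + t * φ x) - q * log (expIntegral μ h fun x => u₀ x + t * φ x)
  have hg := hasDerivAt_expIntegral μ h u₀ φ
  have hg₀ : (expIntegral μ h fun x => u₀ x + 0 * φ x) = q := by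
    simp only [zero_mul, add_zero]; exact hu₀
  have hF : HasDerivAt F (graphInt μ (fun x => φ x * (c - graphLap ω μ u₀ x))
      - q * ((graphInt μ fun x => φ x * (h x * exp (u₀ x))) / q)) 0 := by
    refine (hasDerivAt_kwEnergy hsymm (fun x => (hμ x).ne') u₀ φ).sub (HasDerivAt.const_mul q ?_)
    simpa only [hg₀] using hg.log (hg₀ ▸ hq.ne')
  have hF_min : IsLocalMin F 0 := by
    have hpos : ∀ᶠ t in nhds (0 : ℝ), 0 < expIntegral μ h fun x => u₀ x + t * φ x :=
      hg.continuousAt.eventually (lt_mem_nhds (by simpa only [hg₀] using hq))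
    filter_upwards [hpos] with t ht
    have := kwEnergy_le_of_isMinOn hq hmin ht
    simp only [F, zero_mul, add_zero, hu₀]
    linarith
  have hcrit := hF_min.hasDerivAt_eq_zero hF
  rw [graphInt_single_mul, graphInt_single_mul, mul_div_cancel₀ _ hq.ne', ← sub_mul] at hcrit
  linarith [(mul_eq_zero.1 hcrit).resolve_right (hμ z).ne']

end EulerLagrange

section Poincare

variable {ω : V → V → ℝ}

theorem le_sum_sum {f : V → V → ℝ} (hf : ∀ x y, 0 ≤ f x y) (a b : V) :
    f a b ≤ ∑ x, ∑ y, f x y :=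
  (Finset.single_le_sum (fun y _ => hf a y) (mem_univ b)).trans
    (Finset.single_le_sum (fun x _ => Finset.sum_nonneg fun y _ => hf x y) (mem_univ a))

theorem dirichletForm_self_nonneg (hnonneg : ∀ x y, 0 ≤ ω x y) (u : V → ℝ) :
    0 ≤ dirichletForm ω u u :=
  mul_nonneg (by norm_num) <| Finset.sum_nonneg fun x _ => Finset.sum_nonneg fun y _ => by
    rw [mul_assoc]; exact mul_nonneg (hnonneg x y) (mul_self_nonneg _)

theorem abs_sub_le_sqrt_mul_sqrt_dirichletForm (hnonneg : ∀ x y, 0 ≤ ω x y) (u : V → ℝ)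
    {a b : V} (hab : 0 < ω a b) :
    |u b - u a| ≤ √(2 / ω a b) * √(dirichletForm ω u u) := by
  have hterm : ω a b * (u b - u a) ^ 2 ≤ 2 * dirichletForm ω u u := by
    have := le_sum_sum (f := fun x y => ω x y * (u y - u x) * (u y - u x))
      (fun x y => by rw [mul_assoc]; exact mul_nonneg (hnonneg x y) (mul_self_nonneg _)) a b
    rw [dirichletForm]
    nlinarith
  rw [← sqrt_mul (by positivity)]
  refine abs_le_sqrt ?_
  rw [div_mul_eq_mul_div, le_div_iff₀ hab]
  linarith

theorem sub_le_of_chain (hnonneg : ∀ x y, 0 ≤ ω x y) (u : V → ℝ) (p : ℕ → V) (m : ℕ)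
    (hp : ∀ i < m, 0 < ω (p i) (p (i + 1))) :
    u (p m) - u (p 0) ≤ (∑ i ∈ range m, √(2 / ω (p i) (p (i + 1)))) * √(dirichletForm ω u u) := by
  induction m with
  | zero => simp
  | succ m ih =>
    have hstep := (le_abs_self _).trans
      (abs_sub_le_sqrt_mul_sqrt_dirichletForm hnonneg u (hp m (Nat.lt_succ_self m)))
    rw [Finset.sum_range_succ, add_mul]
    linarith [ih fun i hi => hp i (Nat.lt_succ_of_lt hi)]

theorem exists_sub_le_mul_sqrt_dirichletForm (hnonneg : ∀ x y, 0 ≤ ω x y)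
    (hconn : graphConn ω) :
    ∃ C, 0 ≤ C ∧ ∀ (u : V → ℝ) x y, u y - u x ≤ C * √(dirichletForm ω u u) := by
  have hpair : ∀ x y : V, ∃ C, 0 ≤ C ∧ ∀ u : V → ℝ, u y - u x ≤ C * √(dirichletForm ω u u) := by
    intro x y
    rcases eq_or_ne x y with rfl | hxy
    · exact ⟨0, le_rfl, fun u => by simp⟩
    obtain ⟨m, p, rfl, rfl, hp⟩ := hconn x y hxy
    exact ⟨_, Finset.sum_nonneg fun i _ => sqrt_nonneg _, fun u => sub_le_of_chain hnonneg u p m hp⟩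
  choose C hC0 hC using hpair
  exact ⟨∑ x, ∑ y, C x y, Finset.sum_nonneg fun x _ => Finset.sum_nonneg fun y _ => hC0 x y,
    fun u x y => (hC x y u).trans <|
      mul_le_mul_of_nonneg_right (le_sum_sum hC0 x y) (sqrt_nonneg _)⟩

end Poincare

section Minimizer

variable {ω : V → V → ℝ} {μ h : V → ℝ} {c : ℝ}

theorem continuous_kwEnergy : Continuous (kwEnergy ω μ c) := by
  unfold kwEnergy dirichletForm graphInt; fun_prop

theorem continuous_expIntegral : Continuous (expIntegral μ h) := by
  unfold expIntegral graphInt; fun_prop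

theorem mul_sum_le_graphInt (hμ : ∀ x, 0 < μ x) {u : V → ℝ} {m : ℝ} (hm : ∀ x, m ≤ u x) :
    m * ∑ x, μ x ≤ graphInt μ u := by
  rw [Finset.mul_sum]
  exact Finset.sum_le_sum fun x _ => mul_le_mul_of_nonneg_right (hm x) (hμ x).le

theorem expIntegral_le (hμ : ∀ x, 0 < μ x) {u : V → ℝ} {M : ℝ} (hM : ∀ x, u x ≤ M) :
    expIntegral μ h u ≤ (∑ x, |h x| * μ x) * exp M := by
  rw [Finset.sum_mul]
  refine Finset.sum_le_sum fun x _ => ?_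
  have := mul_le_mul (le_abs_self (h x)) (exp_le_exp.2 (hM x)) (exp_pos _).le (abs_nonneg _)
  nlinarith [hμ x]

theorem isBounded_kwEnergy_sublevel [Nonempty V] (hnonneg : ∀ x y, 0 ≤ ω x y)
    (hconn : graphConn ω) (hμ : ∀ x, 0 < μ x) (hc : 0 < c) (L : ℝ) :
    Bornology.IsBounded {u | expIntegral μ h u = c * ∑ x, μ x ∧ kwEnergy ω μ c u ≤ L} := by
  obtain ⟨C, hC0, hC⟩ := exists_sub_le_mul_sqrt_dirichletForm hnonneg hconn
  set q := c * ∑ x, μ x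
  have hq : 0 < q := mul_pos hc (Finset.sum_pos (fun x _ => hμ x) univ_nonempty)
  set K := log q - log (∑ x, |h x| * μ x)
  set S := 2 * |L - q * K| + 2 * q * C + 1
  refine (Metric.isBounded_iff_subset_closedBall 0).2
    ⟨|K| + |L| / q + C * S, fun u ⟨hg, hJ⟩ => ?_⟩
  rw [mem_closedBall_zero_iff, pi_norm_le_iff_of_nonneg (by positivity)]
  intro x
  obtain ⟨a, ha⟩ := Finite.exists_min u
  obtain ⟨b, hb⟩ := Finite.exists_max u
  set s := √(dirichletForm ω u u)
  have hs2 : s ^ 2 = dirichletForm ω u u := sq_sqrt (dirichletForm_self_nonneg hnonneg u)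
  have hosc : u b - u a ≤ C * s := hC u a b
  have hmin : q * u a ≤ c * graphInt μ u := by
    show c * (∑ x, μ x) * u a ≤ c * graphInt μ u
    linarith [mul_le_mul_of_nonneg_left (mul_sum_le_graphInt hμ ha) hc.le]
  have hmax : K ≤ u b := by
    have hle : q ≤ (∑ x, |h x| * μ x) * exp (u b) := hg ▸ expIntegral_le hμ hb
    have hA : 0 < ∑ x, |h x| * μ x := pos_of_mul_pos_left (hq.trans_le hle) (exp_pos _).le
    have := log_le_log hq hle
    rw [log_mul hA.ne' (exp_pos _).ne', log_exp] at this
    linarith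
  have hJ' : s ^ 2 / 2 + q * u a ≤ L := by
    rw [kwEnergy, ← hs2] at hJ; linarith
  have hquad : s ^ 2 ≤ 2 * (L - q * K) + 2 * q * C * s := by
    nlinarith [mul_le_mul_of_nonneg_left (show K - C * s ≤ u a by linarith) hq.le]
  have hsS : s ≤ S := by
    by_contra! hSs
    nlinarith [le_abs_self (L - q * K), mul_nonneg hq.le hC0, abs_nonneg (L - q * K)]
  have hua : u a ≤ L / q := by
    rw [le_div_iff₀ hq]; nlinarith
  rw [Real.norm_eq_abs, abs_le]
  constructor
  · nlinarith [neg_abs_le K, div_nonneg (abs_nonneg L) hq.le, ha x]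
  · nlinarith [abs_nonneg K, div_le_div_of_nonneg_right (le_abs_self L) hq.le, hb x]

theorem expIntegral_single [DecidableEq V] (x₀ : V) (t : ℝ) :
    expIntegral μ h (Pi.single x₀ t) = expIntegral μ h 0 + (exp t - 1) * (h x₀ * μ x₀) := by
  simp only [expIntegral, graphInt, ← Finset.sum_erase_add _ _ (mem_univ x₀), Pi.single_eq_same,
    Pi.zero_apply, exp_zero]
  rw [Finset.sum_congr rfl fun x hx => by rw [Pi.single_eq_of_ne (ne_of_mem_erase hx), exp_zero]]
  ring

theorem exists_expIntegral_eq (hμ : ∀ x, 0 < μ x) {x₀ : V} (hx₀ : 0 < h x₀) {q : ℝ}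
    (hq : 0 < q) : ∃ u, expIntegral μ h u = q := by
  classical
  have ha : 0 < h x₀ * μ x₀ := mul_pos hx₀ (hμ x₀)
  set t := log ((|expIntegral μ h 0| + 1) / (h x₀ * μ x₀) + 1)
  have ht : 0 < expIntegral μ h (Pi.single x₀ t) := by
    rw [expIntegral_single, exp_log (by positivity), add_sub_cancel_right, div_mul_cancel₀ _ ha.ne']
    linarith [neg_abs_le (expIntegral μ h 0)]
  refine ⟨fun x => (Pi.single x₀ t : V → ℝ) x
    + (log q - log (expIntegral μ h (Pi.single x₀ t))), ?_⟩
  rw [expIntegral_add_const, exp_sub, exp_log hq, exp_log ht]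
  field_simp

theorem exists_isMinOn_kwEnergy [Nonempty V] (hnonneg : ∀ x y, 0 ≤ ω x y)
    (hconn : graphConn ω) (hμ : ∀ x, 0 < μ x) (hc : 0 < c) {x₀ : V} (hx₀ : 0 < h x₀) :
    ∃ u₀ ∈ {u | expIntegral μ h u = c * ∑ x, μ x},
      IsMinOn (kwEnergy ω μ c) {u | expIntegral μ h u = c * ∑ x, μ x} u₀ := by
  have hq : 0 < c * ∑ x, μ x := mul_pos hc (Finset.sum_pos (fun x _ => hμ x) univ_nonempty)
  obtain ⟨u₁, hu₁⟩ := exists_expIntegral_eq hμ hx₀ hq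
  have hcompact : IsCompact
      {u | expIntegral μ h u = c * ∑ x, μ x ∧ kwEnergy ω μ c u ≤ kwEnergy ω μ c u₁} :=
    Metric.isCompact_of_isClosed_isBounded
      ((isClosed_eq continuous_expIntegral continuous_const).inter
        (isClosed_le continuous_kwEnergy continuous_const))
      (isBounded_kwEnergy_sublevel hnonneg hconn hμ hc _)
  obtain ⟨u₀, ⟨hu₀, hu₀₁⟩, hmin⟩ :=
    hcompact.exists_isMinOn ⟨u₁, hu₁, le_rfl⟩ continuous_kwEnergy.continuousOn
  refine ⟨u₀, hu₀, fun u hu => ?_⟩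
  by_cases hu₁u : kwEnergy ω μ c u ≤ kwEnergy ω μ c u₁
  · exact hmin ⟨hu, hu₁u⟩
  · exact hu₀₁.trans (le_of_not_ge hu₁u)

end Minimizer

end

/-- Solvability in the positive case: for `c > 0`, the Kazdan–Warner equation
`−Δu = h e^u − c` is solvable if and only if `max h > 0`. -/
theorem kazdan_warner_positive_case {V : Type*} [Fintype V] [Nonempty V]
    (ω : V → V → ℝ) (μ : V → ℝ)
    (hsymm : ∀ x y, ω x y = ω y x)
    (hnonneg : ∀ x y, 0 ≤ ω x y)
    (hconn : graphConn ω)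
    (hμ : ∀ x, 0 < μ x)
    (h : V → ℝ) (c : ℝ) (hc : 0 < c) :
    (∃ u : V → ℝ, ∀ x, -graphLap ω μ u x = h x * Real.exp (u x) - c) ↔
      0 < ⨆ x, h x := by
  constructor
  · rintro ⟨u, hu⟩
    obtain ⟨x, hx⟩ := exists_pos_of_neg_graphLap_eq hsymm hμ hc hu
    exact hx.trans_le (le_ciSup (Finite.bddAbove_range h) x)
  · intro hsup
    obtain ⟨x₀, hx₀⟩ := exists_lt_of_lt_ciSup hsup
    obtain ⟨u₀, hu₀, hmin⟩ := exists_isMinOn_kwEnergy hnonneg hconn hμ hc hx₀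
    exact ⟨u₀, neg_graphLap_eq_of_isMinOn hsymm hμ hc hu₀ hmin⟩
end

section
/- Solvability in the flat case: Let h : V → ℝ with h not identically zero. Then there exists a function u : V → ℝ satisfying −Δu(x) = h(x)e^{u(x)} for all x ∈ V if and only if h changes sign (h is positive somewhere and negative somewhere) and ∫_V h dμ < 0. -/
open Finset Real

/-!
Green's formula turns `∫ (-Δu) e⁻ᵘ dμ` into `½ Σ ω(x,y) (u y - u x) (e^{-u y} - e^{-u x})`, which
is negative unless `u` is constant. For a solution the left side is `∫ h dμ`, while
`∫ h eᵘ dμ = ∫ -Δu dμ = 0` forces `h` to change sign.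

Conversely, minimise the Dirichlet energy on the level set `∫ h eᵘ dμ = 0`: it is nonempty when
`h > 0` somewhere and `∫ h dμ < 0`, and invariant under adding constants, and on functions vanishing
at a fixed vertex connectivity makes the energy coercive. A Lagrange multiplier gives
`-Δu₀ = κ h e^{u₀}`; testing against `e^{-u₀}` gives `κ ∫ h dμ ≤ 0`, and `κ = 0` would force `u₀`
to be constant, contradicting the constraint. So `κ > 0` and `u₀ + log κ` is a solution.
-/

section
variable {V : Type*} {ω : V → V → ℝ}

theorem graphConn.exists_weight_pos_ne {α : Type*} (hconn : graphConn ω) {u : V → α} {x y : V}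
    (hxy : u x ≠ u y) : ∃ a b, 0 < ω a b ∧ u a ≠ u b := by
  by_contra! hedge
  obtain ⟨m, p, rfl, rfl, hp⟩ := hconn x y fun h => hxy (h ▸ rfl)
  have hstep : ∀ i ≤ m, u (p 0) = u (p i) := by
    intro i
    induction i with
    | zero => exact fun _ => rfl
    | succ i ih => exact fun hi => (ih (by omega)).trans (hedge _ _ (hp i (by omega)))
  exact hxy (hstep m le_rfl)

variable [Fintype V] {μ : V → ℝ}

theorem graphInt_lap_mul (hμ : ∀ x, μ x ≠ 0) (hsymm : ∀ x y, ω x y = ω y x) (u v : V → ℝ) :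
    graphInt μ (fun x => graphLap ω μ u x * v x)
      = -(1 / 2) * ∑ x, ∑ y, ω x y * (u y - u x) * (v y - v x) := by
  set S := ∑ x, ∑ y, ω x y * (u y - u x) * v x
  have hswap : ∑ x, ∑ y, ω x y * (u y - u x) * v y = -S := by
    rw [Finset.sum_comm, ← Finset.sum_neg_distrib]
    refine Finset.sum_congr rfl fun x _ => ?_
    rw [← Finset.sum_neg_distrib]
    exact Finset.sum_congr rfl fun y _ => by rw [hsymm]; ring
  have hsplit : ∑ x, ∑ y, ω x y * (u y - u x) * (v y - v x)
      = ∑ x, ∑ y, ω x y * (u y - u x) * v y - S := by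
    simp only [S, ← Finset.sum_sub_distrib, mul_sub]
  have hlap : ∀ x, graphLap ω μ u x * v x * μ x = ∑ y, ω x y * (u y - u x) * v x := by
    intro x
    rw [graphLap, ← Finset.sum_mul]
    field_simp [hμ x]
  rw [hsplit, hswap, graphInt, Finset.sum_congr rfl fun x _ => hlap x]
  ring

theorem graphInt_lap (hμ : ∀ x, μ x ≠ 0) (hsymm : ∀ x y, ω x y = ω y x) (u : V → ℝ) :
    graphInt μ (graphLap ω μ u) = 0 := by
  simpa using graphInt_lap_mul hμ hsymm u 1

/-- `graphEnergy ω u = 2 ∫ |∇u|² dμ`, for every `μ`. -/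
def graphEnergy (ω : V → V → ℝ) (u : V → ℝ) : ℝ :=
  ∑ x, ∑ y, ω x y * (u y - u x) ^ 2

theorem continuous_graphEnergy : Continuous (graphEnergy ω) := by
  unfold graphEnergy
  fun_prop

theorem graphEnergy_sub_const (u : V → ℝ) (c : ℝ) :
    graphEnergy ω (fun x => u x - c) = graphEnergy ω u := by
  simp only [graphEnergy, sub_sub_sub_cancel_right]

theorem weight_mul_sq_le_graphEnergy (hnonneg : ∀ x y, 0 ≤ ω x y) (u : V → ℝ) (a b : V) :
    ω a b * (u b - u a) ^ 2 ≤ graphEnergy ω u := by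
  have hterm : ∀ x y, 0 ≤ ω x y * (u y - u x) ^ 2 := fun x y => by
    have := hnonneg x y
    positivity
  calc ω a b * (u b - u a) ^ 2 ≤ ∑ y, ω a y * (u y - u a) ^ 2 :=
        Finset.single_le_sum (fun y _ => hterm a y) (Finset.mem_univ b)
    _ ≤ graphEnergy ω u :=
        Finset.single_le_sum (f := fun x => ∑ y, ω x y * (u y - u x) ^ 2)
          (fun x _ => Finset.sum_nonneg fun y _ => hterm x y) (Finset.mem_univ a)

/-- Discrete Poincaré inequality: along a path `x = p 0, …, p m = y` of positive weights,
Cauchy–Schwarz bounds `(u x - u y)²` by `m · Σ ω(pᵢ, pᵢ₊₁)⁻¹` times the energy. -/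
theorem graphConn.exists_sq_sub_le_mul_graphEnergy (hconn : graphConn ω)
    (hnonneg : ∀ x y, 0 ≤ ω x y) (x y : V) :
    ∃ C, 0 ≤ C ∧ ∀ u : V → ℝ, (u x - u y) ^ 2 ≤ C * graphEnergy ω u := by
  rcases eq_or_ne x y with rfl | hxy
  · exact ⟨0, le_rfl, fun u => by simp⟩
  obtain ⟨m, p, rfl, rfl, hp⟩ := hconn x y hxy
  set w : ℕ → ℝ := fun i => ω (p i) (p (i + 1))
  refine ⟨m * ∑ i ∈ Finset.range m, (w i)⁻¹,
    mul_nonneg m.cast_nonneg (Finset.sum_nonneg fun i hi =>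
      inv_nonneg.2 (hp i (Finset.mem_range.1 hi)).le), fun u => ?_⟩
  have hstep : ∀ i ∈ Finset.range m,
      (u (p i) - u (p (i + 1))) ^ 2 ≤ (w i)⁻¹ * graphEnergy ω u := by
    intro i hi
    have hw : 0 < w i := hp i (Finset.mem_range.1 hi)
    rw [inv_mul_eq_div, le_div_iff₀ hw]
    linarith [weight_mul_sq_le_graphEnergy hnonneg u (p i) (p (i + 1))]
  calc (u (p 0) - u (p m)) ^ 2 = (∑ i ∈ Finset.range m, (u (p i) - u (p (i + 1)))) ^ 2 := by
        rw [Finset.sum_range_sub']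
    _ ≤ m * ∑ i ∈ Finset.range m, (u (p i) - u (p (i + 1))) ^ 2 := by
        simpa using sq_sum_le_card_mul_sum_sq (s := Finset.range m)
          (f := fun i => u (p i) - u (p (i + 1)))
    _ ≤ m * ∑ i ∈ Finset.range m, (w i)⁻¹ * graphEnergy ω u := by
        gcongr with i hi
        exact hstep i hi
    _ = m * (∑ i ∈ Finset.range m, (w i)⁻¹) * graphEnergy ω u := by
        rw [← Finset.sum_mul, mul_assoc]

theorem graphConn.isCompact_graphEnergy_le (hconn : graphConn ω) (hnonneg : ∀ x y, 0 ≤ ω x y)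
    (x₀ : V) (M : ℝ) : IsCompact {u : V → ℝ | u x₀ = 0 ∧ graphEnergy ω u ≤ M} := by
  choose C hC0 hC using fun x => hconn.exists_sq_sub_le_mul_graphEnergy hnonneg x x₀
  refine (isCompact_univ_pi fun x => isCompact_Icc (a := -√(C x * M)) (b := √(C x * M)))
    |>.of_isClosed_subset ?_ ?_
  · exact (isClosed_eq (continuous_apply x₀) continuous_const).inter
      (isClosed_le continuous_graphEnergy continuous_const)
  · rintro u ⟨hu₀, hM⟩ x -
    have hsq : u x ^ 2 ≤ C x * M := by
      simpa [hu₀] using (hC x u).trans (mul_le_mul_of_nonneg_left hM (hC0 x))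
    exact abs_le.1 (Real.abs_le_sqrt hsq)

theorem exists_isMinOn_graphEnergy [Nonempty V] (hconn : graphConn ω)
    (hnonneg : ∀ x y, 0 ≤ ω x y) {S : Set (V → ℝ)} (hS : IsClosed S) (hSne : S.Nonempty)
    (hshift : ∀ u ∈ S, ∀ c : ℝ, (fun x => u x - c) ∈ S) :
    ∃ u₀ ∈ S, IsMinOn (graphEnergy ω) S u₀ := by
  obtain ⟨x₀⟩ := ‹Nonempty V›
  obtain ⟨u₁, hu₁⟩ := hSne
  set K := S ∩ {u : V → ℝ | u x₀ = 0 ∧ graphEnergy ω u ≤ graphEnergy ω u₁}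
  have hpin : ∀ u ∈ S, graphEnergy ω u ≤ graphEnergy ω u₁ → (fun x => u x - u x₀) ∈ K :=
    fun u hu hle => ⟨hshift u hu _, sub_self _, (graphEnergy_sub_const u _).trans_le hle⟩
  obtain ⟨u₀, hu₀, hmin⟩ := ((hconn.isCompact_graphEnergy_le hnonneg x₀ _).inter_left hS)
    |>.exists_isMinOn ⟨_, hpin u₁ hu₁ le_rfl⟩ continuous_graphEnergy.continuousOn
  refine ⟨u₀, hu₀.1, isMinOn_iff.2 fun v hv => ?_⟩
  by_cases hle : graphEnergy ω v ≤ graphEnergy ω u₁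
  · simpa only [graphEnergy_sub_const] using isMinOn_iff.1 hmin _ (hpin v hv hle)
  · linarith [hu₀.2.2]

theorem exists_hasStrictFDerivAt_graphEnergy (hμ : ∀ x, μ x ≠ 0) (hsymm : ∀ x y, ω x y = ω y x)
    (u : V → ℝ) : ∃ L : (V → ℝ) →L[ℝ] ℝ, HasStrictFDerivAt (graphEnergy ω) L u ∧
      ∀ v, L v = -4 * graphInt μ (fun x => graphLap ω μ u x * v x) := by
  refine ⟨_, HasStrictFDerivAt.fun_sum fun x _ => HasStrictFDerivAt.fun_sum fun y _ =>
    (((hasStrictFDerivAt_apply y u).sub (hasStrictFDerivAt_apply x u)).pow 2).const_mul (ω x y),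
    fun v => ?_⟩
  rw [graphInt_lap_mul hμ hsymm]
  simp only [_root_.sum_apply, smul_apply, sub_apply, ContinuousLinearMap.proj_apply, smul_eq_mul,
    nsmul_eq_mul, Finset.mul_sum]
  exact Finset.sum_congr rfl fun x _ => Finset.sum_congr rfl fun y _ => by ring

theorem exists_hasStrictFDerivAt_graphInt_mul_exp (h u : V → ℝ) :
    ∃ L : (V → ℝ) →L[ℝ] ℝ,
      HasStrictFDerivAt (fun u => graphInt μ (fun x => h x * exp (u x))) L u ∧
      ∀ v, L v = graphInt μ (fun x => h x * exp (u x) * v x) := by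
  refine ⟨_, HasStrictFDerivAt.fun_sum fun x _ =>
    (((hasStrictFDerivAt_apply x u).exp).const_mul (h x)).mul_const (μ x), fun v => ?_⟩
  simp only [graphInt, _root_.sum_apply, smul_apply, ContinuousLinearMap.proj_apply, smul_eq_mul]
  exact Finset.sum_congr rfl fun x _ => by ring

theorem eq_zero_of_forall_graphInt_mul_eq_zero (hμ : ∀ x, μ x ≠ 0) {f : V → ℝ}
    (hf : ∀ v : V → ℝ, graphInt μ (fun x => f x * v x) = 0) (x : V) : f x = 0 := by
  classical
  simpa [graphInt, Pi.single_apply, hμ x] using hf (Pi.single x 1)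

/-- Lagrange multipliers; the multiplier of the energy is nonzero because the constraint has
nonzero gradient at any vertex where `h ≠ 0`. -/
theorem exists_neg_lap_eq_mul_of_isMinOn (hμ : ∀ x, μ x ≠ 0) (hsymm : ∀ x y, ω x y = ω y x)
    {h u₀ : V → ℝ} {x₁ : V} (hx₁ : h x₁ ≠ 0)
    (hu₀ : graphInt μ (fun x => h x * exp (u₀ x)) = 0)
    (hmin : IsMinOn (graphEnergy ω) {u | graphInt μ (fun x => h x * exp (u x)) = 0} u₀) :
    ∃ κ : ℝ, ∀ x, -graphLap ω μ u₀ x = κ * (h x * exp (u₀ x)) := by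
  obtain ⟨Lc, hLc, hLc_apply⟩ := exists_hasStrictFDerivAt_graphInt_mul_exp (μ := μ) h u₀
  obtain ⟨Le, hLe, hLe_apply⟩ := exists_hasStrictFDerivAt_graphEnergy hμ hsymm u₀
  have hextr : IsLocalExtrOn (graphEnergy ω)
      {u | graphInt μ (fun x => h x * exp (u x))
        = graphInt μ (fun x => h x * exp (u₀ x))} u₀ := by
    rw [hu₀]
    exact Or.inl hmin.localize
  obtain ⟨a, b, hab, hLagrange⟩ := hextr.exists_multipliers_of_hasStrictFDerivAt_1d hLc hLe
  have hEL : ∀ x, a * (h x * exp (u₀ x)) - 4 * b * graphLap ω μ u₀ x = 0 := by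
    refine eq_zero_of_forall_graphInt_mul_eq_zero hμ fun v => ?_
    have hv := DFunLike.congr_fun hLagrange v
    simp only [add_apply, smul_apply, smul_eq_mul, hLc_apply, hLe_apply,
      zero_apply, graphInt, Finset.mul_sum, ← Finset.sum_add_distrib] at hv
    rw [graphInt, ← hv]
    exact Finset.sum_congr rfl fun x _ => by ring
  have hb : b ≠ 0 := by
    rintro rfl
    have ha : a ≠ 0 := fun ha => hab (by simp [ha])
    simpa [ha, hx₁, exp_ne_zero] using hEL x₁
  exact ⟨-a / (4 * b), fun x => by field_simp; linarith [hEL x]⟩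

theorem sub_mul_exp_neg_sub_exp_neg_neg {s t : ℝ} (hst : s ≠ t) :
    (t - s) * (exp (-t) - exp (-s)) < 0 := by
  rcases hst.lt_or_gt with hlt | hlt
  · exact mul_neg_of_pos_of_neg (by linarith) (by simpa using hlt)
  · exact mul_neg_of_neg_of_pos (by linarith) (by simpa using hlt)

theorem sub_mul_exp_neg_sub_exp_neg_nonpos (s t : ℝ) : (t - s) * (exp (-t) - exp (-s)) ≤ 0 := by
  rcases eq_or_ne s t with rfl | hst
  · simp
  · exact (sub_mul_exp_neg_sub_exp_neg_neg hst).le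

theorem graphInt_neg_lap_mul_exp_neg (hμ : ∀ x, μ x ≠ 0) (hsymm : ∀ x y, ω x y = ω y x)
    (u : V → ℝ) : graphInt μ (fun x => -graphLap ω μ u x * exp (-u x))
      = 1 / 2 * ∑ x, ∑ y, ω x y * ((u y - u x) * (exp (-u y) - exp (-u x))) := by
  have hneg : graphInt μ (fun x => -graphLap ω μ u x * exp (-u x))
      = -graphInt μ (fun x => graphLap ω μ u x * exp (-u x)) := by
    simp only [graphInt, neg_mul, Finset.sum_neg_distrib]
  rw [hneg, graphInt_lap_mul hμ hsymm]
  simp only [mul_assoc]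
  ring

theorem graphInt_neg_lap_mul_exp_neg_nonpos (hμ : ∀ x, μ x ≠ 0) (hsymm : ∀ x y, ω x y = ω y x)
    (hnonneg : ∀ x y, 0 ≤ ω x y) (u : V → ℝ) :
    graphInt μ (fun x => -graphLap ω μ u x * exp (-u x)) ≤ 0 := by
  rw [graphInt_neg_lap_mul_exp_neg hμ hsymm]
  exact mul_nonpos_of_nonneg_of_nonpos (by norm_num) <| Finset.sum_nonpos fun x _ =>
    Finset.sum_nonpos fun y _ =>
      mul_nonpos_of_nonneg_of_nonpos (hnonneg x y) (sub_mul_exp_neg_sub_exp_neg_nonpos _ _)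

theorem graphInt_neg_lap_mul_exp_neg_neg (hμ : ∀ x, μ x ≠ 0) (hsymm : ∀ x y, ω x y = ω y x)
    (hnonneg : ∀ x y, 0 ≤ ω x y) (hconn : graphConn ω) {u : V → ℝ} {x y : V} (hxy : u x ≠ u y) :
    graphInt μ (fun x => -graphLap ω μ u x * exp (-u x)) < 0 := by
  obtain ⟨a, b, hab, huab⟩ := hconn.exists_weight_pos_ne hxy
  have hterm : ∀ x y, ω x y * ((u y - u x) * (exp (-u y) - exp (-u x))) ≤ 0 := fun x y =>
    mul_nonpos_of_nonneg_of_nonpos (hnonneg x y) (sub_mul_exp_neg_sub_exp_neg_nonpos _ _)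
  rw [graphInt_neg_lap_mul_exp_neg hμ hsymm]
  refine mul_neg_of_pos_of_neg (by norm_num) <| Finset.sum_neg' (fun x _ => Finset.sum_nonpos
    fun y _ => hterm x y) ⟨a, Finset.mem_univ a, Finset.sum_neg' (fun y _ => hterm a y) ?_⟩
  exact ⟨b, Finset.mem_univ b,
    mul_neg_of_pos_of_neg hab (sub_mul_exp_neg_sub_exp_neg_neg huab)⟩

theorem graphInt_neg_lap_mul_exp_neg_eq_mul {h u : V → ℝ} {κ : ℝ}
    (hκ : ∀ x, -graphLap ω μ u x = κ * (h x * exp (u x))) :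
    graphInt μ (fun x => -graphLap ω μ u x * exp (-u x)) = κ * graphInt μ h := by
  simp only [graphInt, hκ, Finset.mul_sum, mul_assoc, ← exp_add, add_neg_cancel, exp_zero,
    one_mul]

theorem exists_pos_and_neg_of_graphInt_eq_zero (hμ : ∀ x, 0 < μ x) {f : V → ℝ}
    (hf : graphInt μ f = 0) {x₀ : V} (hx₀ : f x₀ ≠ 0) : (∃ x, 0 < f x) ∧ ∃ x, f x < 0 := by
  constructor
  · by_contra! hnonpos
    have : graphInt μ f < 0 := Finset.sum_neg'
      (fun x _ => mul_nonpos_of_nonpos_of_nonneg (hnonpos x) (hμ x).le)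
      ⟨x₀, Finset.mem_univ x₀, mul_neg_of_neg_of_pos ((hnonpos x₀).lt_of_ne hx₀) (hμ x₀)⟩
    linarith
  · by_contra! hnonneg
    have : 0 < graphInt μ f := Finset.sum_pos'
      (fun x _ => mul_nonneg (hnonneg x) (hμ x).le)
      ⟨x₀, Finset.mem_univ x₀, mul_pos ((hnonneg x₀).lt_of_ne' hx₀) (hμ x₀)⟩
    linarith

theorem sign_conditions_of_neg_lap_eq_mul_exp (hμ : ∀ x, 0 < μ x) (hsymm : ∀ x y, ω x y = ω y x)
    (hnonneg : ∀ x y, 0 ≤ ω x y) (hconn : graphConn ω) {h u : V → ℝ} (hne : ∃ x, h x ≠ 0)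
    (hu : ∀ x, -graphLap ω μ u x = h x * exp (u x)) :
    (∃ x, 0 < h x) ∧ (∃ x, h x < 0) ∧ graphInt μ h < 0 := by
  have hμ' : ∀ x, μ x ≠ 0 := fun x => (hμ x).ne'
  obtain ⟨x₀, hx₀⟩ := hne
  have hzero : graphInt μ (fun x => h x * exp (u x)) = 0 := by
    simp only [← hu]
    simpa [graphInt] using graphInt_lap hμ' hsymm u
  obtain ⟨⟨xpos, hxpos⟩, ⟨xneg, hxneg⟩⟩ :=
    exists_pos_and_neg_of_graphInt_eq_zero hμ hzero (mul_ne_zero hx₀ (exp_ne_zero (u x₀)))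
  refine ⟨⟨xpos, pos_of_mul_pos_left hxpos (exp_pos _).le⟩,
    ⟨xneg, (neg_iff_pos_of_mul_neg hxneg).2 (exp_pos _)⟩, ?_⟩
  have hvar : ∃ x y, u x ≠ u y := by
    by_contra! hconst
    have hlap : graphLap ω μ u x₀ = 0 := by simp [graphLap, hconst _ x₀]
    have := hu x₀
    simp [hlap, hx₀, exp_ne_zero] at this
  obtain ⟨x, y, hxy⟩ := hvar
  have htest := graphInt_neg_lap_mul_exp_neg_eq_mul (κ := 1) (by simpa using hu)
  linarith [graphInt_neg_lap_mul_exp_neg_neg hμ' hsymm hnonneg hconn (μ := μ) hxy]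

theorem pos_of_neg_lap_eq_mul (hμ : ∀ x, μ x ≠ 0) (hsymm : ∀ x y, ω x y = ω y x)
    (hnonneg : ∀ x y, 0 ≤ ω x y) (hconn : graphConn ω) {h u : V → ℝ} {κ : ℝ}
    (hint : graphInt μ h < 0) (hu : graphInt μ (fun x => h x * exp (u x)) = 0)
    (hκ : ∀ x, -graphLap ω μ u x = κ * (h x * exp (u x))) : 0 < κ := by
  have htest := graphInt_neg_lap_mul_exp_neg_eq_mul hκ
  have hκ_nonneg : 0 ≤ κ := by
    by_contra! hκneg
    linarith [mul_pos_of_neg_of_neg hκneg hint,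
      graphInt_neg_lap_mul_exp_neg_nonpos hμ hsymm hnonneg u]
  refine hκ_nonneg.lt_of_ne' ?_
  rintro rfl
  by_cases hvar : ∃ x y, u x ≠ u y
  · obtain ⟨x, y, hxy⟩ := hvar
    linarith [graphInt_neg_lap_mul_exp_neg_neg hμ hsymm hnonneg hconn (μ := μ) hxy]
  rcases isEmpty_or_nonempty V with hV | ⟨⟨x₀⟩⟩
  · simp [graphInt] at hint
  have hconst : ∀ x, u x = u x₀ := fun x => by
    by_contra hx
    exact hvar ⟨x, x₀, hx⟩
  have : graphInt μ (fun x => h x * exp (u x)) = exp (u x₀) * graphInt μ h := by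
    simp only [graphInt, Finset.mul_sum, hconst]
    exact Finset.sum_congr rfl fun x _ => by ring
  nlinarith [exp_pos (u x₀)]

theorem exists_graphInt_mul_exp_eq_zero (hμ : ∀ x, 0 < μ x) {h : V → ℝ} (hpos : ∃ x, 0 < h x)
    (hint : graphInt μ h < 0) : ∃ u : V → ℝ, graphInt μ (fun x => h x * exp (u x)) = 0 := by
  classical
  set A := ∑ x ∈ Finset.univ.filter (0 < h ·), h x * μ x
  set B := ∑ x ∈ Finset.univ.filter (¬0 < h ·), h x * μ x
  have hA : 0 < A := by
    obtain ⟨x₁, hx₁⟩ := hpos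
    exact Finset.sum_pos' (fun x hx => (mul_pos (Finset.mem_filter.1 hx).2 (hμ x)).le)
      ⟨x₁, by simpa using hx₁, mul_pos hx₁ (hμ x₁)⟩
  have hB : B < 0 := by
    have : A + B = graphInt μ h := Finset.sum_filter_add_sum_filter_not _ _ _
    linarith
  refine ⟨fun x => if 0 < h x then log (-B / A) else 0, ?_⟩
  have hterm : ∀ x, h x * exp (if 0 < h x then log (-B / A) else 0) * μ x
      = if 0 < h x then -B / A * (h x * μ x) else h x * μ x := fun x => by
    split_ifs
    · rw [exp_log (div_pos (neg_pos.2 hB) hA)]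
      ring
    · rw [exp_zero, mul_one]
  rw [graphInt, Finset.sum_congr rfl fun x _ => hterm x, Finset.sum_ite, ← Finset.mul_sum]
  field_simp
  ring

theorem exists_neg_lap_eq_mul_exp (hμ : ∀ x, 0 < μ x) (hsymm : ∀ x y, ω x y = ω y x)
    (hnonneg : ∀ x y, 0 ≤ ω x y) (hconn : graphConn ω) {h : V → ℝ} (hpos : ∃ x, 0 < h x)
    (hint : graphInt μ h < 0) : ∃ u : V → ℝ, ∀ x, -graphLap ω μ u x = h x * exp (u x) := by
  obtain ⟨x₁, hx₁⟩ := hpos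
  have : Nonempty V := ⟨x₁⟩
  have hμ' : ∀ x, μ x ≠ 0 := fun x => (hμ x).ne'
  have hclosed : IsClosed {u : V → ℝ | graphInt μ (fun x => h x * exp (u x)) = 0} :=
    isClosed_eq (by unfold graphInt; fun_prop) continuous_const
  have hshift : ∀ u ∈ {u : V → ℝ | graphInt μ (fun x => h x * exp (u x)) = 0}, ∀ c : ℝ,
      (fun x => u x - c) ∈ {u : V → ℝ | graphInt μ (fun x => h x * exp (u x)) = 0} := by
    intro u hu c
    simp only [Set.mem_ofPred_eq, graphInt, exp_sub] at hu ⊢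
    rw [← zero_div (exp c), ← hu, Finset.sum_div]
    exact Finset.sum_congr rfl fun x _ => by ring
  obtain ⟨u₀, hu₀, hmin⟩ := exists_isMinOn_graphEnergy hconn hnonneg hclosed
    (exists_graphInt_mul_exp_eq_zero hμ ⟨x₁, hx₁⟩ hint) hshift
  obtain ⟨κ, hκ⟩ := exists_neg_lap_eq_mul_of_isMinOn hμ' hsymm hx₁.ne' hu₀ hmin
  have hκpos := pos_of_neg_lap_eq_mul hμ' hsymm hnonneg hconn hint hu₀ hκ
  refine ⟨fun x => u₀ x + log κ, fun x => ?_⟩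
  have := hκ x
  simp only [graphLap, add_sub_add_right_eq_sub, exp_add, exp_log hκpos] at this ⊢
  rw [this]
  ring

end

theorem kazdan_warner_flat_case_general {V : Type*} [Fintype V]
    (ω : V → V → ℝ) (μ : V → ℝ)
    (hsymm : ∀ x y, ω x y = ω y x)
    (hnonneg : ∀ x y, 0 ≤ ω x y)
    (hconn : graphConn ω)
    (hμ : ∀ x, 0 < μ x)
    (h : V → ℝ) (hne : ∃ x, h x ≠ 0) :
    (∃ u : V → ℝ, ∀ x, -graphLap ω μ u x = h x * Real.exp (u x)) ↔
      ((∃ x, 0 < h x) ∧ (∃ x, h x < 0) ∧ graphInt μ h < 0) :=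
  ⟨fun ⟨_, hu⟩ => sign_conditions_of_neg_lap_eq_mul_exp hμ hsymm hnonneg hconn hne hu,
    fun ⟨hpos, _, hint⟩ => exists_neg_lap_eq_mul_exp hμ hsymm hnonneg hconn hpos hint⟩

/-- Solvability in the flat case: for `h` not identically zero, the equation
`−Δu = h e^u` is solvable if and only if `h` changes sign and `∫_V h dμ < 0`. -/
theorem kazdan_warner_flat_case {V : Type*} [Fintype V] [Nonempty V]
    (ω : V → V → ℝ) (μ : V → ℝ)
    (hsymm : ∀ x y, ω x y = ω y x)
    (hnonneg : ∀ x y, 0 ≤ ω x y)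
    (hconn : graphConn ω)
    (hμ : ∀ x, 0 < μ x)
    (h : V → ℝ) (hne : ∃ x, h x ≠ 0) :
    (∃ u : V → ℝ, ∀ x, -graphLap ω μ u x = h x * Real.exp (u x)) ↔
      ((∃ x, 0 < h x) ∧ (∃ x, h x < 0) ∧ graphInt μ h < 0) :=
  kazdan_warner_flat_case_general ω μ hsymm hnonneg hconn hμ h hne
end
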